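/- Let s be a complex number with −1 < Re(s) < 1. Then ζ(s) = [2^{s−1} / Γ(1+s)] · ∫_0^∞ t^{s} · (1/sinh²(t) − 1/t²) dt. -/

import Mathlib

/-!
For `re s > 1`, expanding `1 / sinh² t = 4 ∑ n e^{-2nt}` and integrating termwise gives
`∫₀^∞ t^s / sinh² t dt = 2^{1-s} Γ(s+1) ζ(s)`. Subtracting the singular part `t⁻²` of
`1 / sinh² t` on `(0, 1]` alone leaves a function, bounded near `0` and exponentially small at
`∞`, whose Mellin transform at `s + 1` is holomorphic on `re s > -1`. It differs from the
transform of `1 / sinh² t` (for `re s > 1`) and from that of `1 / sinh² t - 1 / t²`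
(for `-1 < re s < 1`) by the same term `1 / (s - 1)`, so the identity theorem carries the
formula from `re s > 1` to the strip.
-/

open MeasureTheory Set Filter Asymptotics Topology

namespace Real

theorem sinh_le_mul_cosh {t : ℝ} (ht : 0 ≤ t) : sinh t ≤ t * cosh t := by
  have hderiv (x : ℝ) : HasDerivAt (fun t => t * cosh t - sinh t) (x * sinh x) x :=
    (((hasDerivAt_id x).mul (hasDerivAt_cosh x)).sub (hasDerivAt_sinh x)).congr_deriv
      (by simp only [id]; ring)
  have hmono : MonotoneOn (fun t => t * cosh t - sinh t) (Ici 0) := by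
    refine monotoneOn_of_deriv_nonneg (convex_Ici 0) (by fun_prop)
      (fun x _ => (hderiv x).differentiableAt.differentiableWithinAt) fun x hx => ?_
    rw [interior_Ici, mem_Ioi] at hx
    rw [(hderiv x).deriv]
    exact mul_nonneg hx.le (sinh_nonneg_iff.mpr hx.le)
  simpa using hmono self_mem_Ici ht ht

theorem abs_one_div_sinh_sq_sub_one_div_sq_le_one {t : ℝ} (ht : 0 < t) :
    |1 / sinh t ^ 2 - 1 / t ^ 2| ≤ 1 := by
  have hsinh : 0 < sinh t := sinh_pos_iff.mpr ht
  have hle : 1 / sinh t ^ 2 ≤ 1 / t ^ 2 :=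
    one_div_le_one_div_of_le (by positivity)
      (pow_le_pow_left₀ ht.le (self_le_sinh_iff.mpr ht.le) 2)
  have hsq : sinh t ^ 2 ≤ t ^ 2 * cosh t ^ 2 := by
    rw [← mul_pow]; exact pow_le_pow_left₀ hsinh.le (sinh_le_mul_cosh ht.le) 2
  have hge : 1 / t ^ 2 - 1 / sinh t ^ 2 ≤ 1 := by
    rw [div_sub_div _ _ (by positivity) (by positivity), div_le_one (by positivity)]
    nlinarith [cosh_sq t]
  rw [abs_le]
  constructor <;> linarith

theorem one_div_sinh_sq_eq (t : ℝ) :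
    1 / sinh t ^ 2 = 4 * exp (-2 * t) / (1 - exp (-2 * t)) ^ 2 := by
  have hsinh : sinh t = exp t * (1 - exp (-2 * t)) / 2 := by
    rw [sinh_eq, mul_sub, mul_one, ← exp_add]; ring_nf
  have hexp : exp (-2 * t) = (exp t ^ 2)⁻¹ := by
    rw [← exp_nat_mul, ← exp_neg]; ring_nf
  rw [hsinh, div_pow, one_div_div, mul_pow, ← div_div, hexp]
  ring

theorem hasSum_one_div_sinh_sq {t : ℝ} (ht : 0 < t) :
    HasSum (fun n : ℕ => 4 * n * exp (-(2 * n) * t)) (1 / sinh t ^ 2) := by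
  have hx : ‖exp (-2 * t)‖ < 1 := by
    rw [norm_of_nonneg (exp_pos _).le, exp_lt_one_iff]; linarith
  have hpow (n : ℕ) : exp (-2 * t) ^ n = exp (-(2 * n) * t) := by
    rw [← exp_nat_mul]; ring_nf
  rw [one_div_sinh_sq_eq, mul_div_assoc]
  simpa only [mul_assoc, hpow] using (hasSum_coe_mul_geometric_of_norm_lt_one hx).mul_left 4

theorem one_div_sinh_sq_le {t : ℝ} (ht : 1 ≤ t) : 1 / sinh t ^ 2 ≤ 16 * exp (-2 * t) := by
  rw [one_div_sinh_sq_eq]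
  set x := exp (-2 * t)
  have hx0 : 0 < x := exp_pos _
  have hx : x ≤ 1 / 2 := by
    have : 2 * t + 1 ≤ exp (2 * t) := add_one_le_exp _
    have h2 : x * exp (2 * t) = 1 := by rw [← exp_add, neg_mul, neg_add_cancel, exp_zero]
    nlinarith
  rw [div_le_iff₀ (by nlinarith)]
  have hfactor : 0 ≤ (1 - 2 * x) * (3 - 2 * x) := mul_nonneg (by linarith) (by linarith)
  nlinarith [mul_nonneg hx0.le hfactor]

theorem four_mul_div_two_mul_rpow_add_one (n : ℕ) {x : ℝ} (hx : x ≠ 0) :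
    4 * n / (2 * n : ℝ) ^ (x + 1) = 2 ^ (1 - x) / (n : ℝ) ^ x := by
  rcases n.eq_zero_or_pos with rfl | hn
  · simp [zero_rpow hx]
  · have hn' : (0 : ℝ) < n := by positivity
    rw [rpow_add_one (by positivity), mul_rpow zero_le_two hn'.le,
      rpow_sub zero_lt_two, rpow_one]
    field_simp
    ring

end Real

namespace Complex

theorem ofReal_cpow_neg_two (t : ℝ) : (t : ℂ) ^ (-2 : ℂ) = ((1 / t ^ 2 : ℝ) : ℂ) := by
  rw [cpow_neg, cpow_ofNat]
  push_cast
  ring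

theorem four_mul_div_two_mul_cpow_add_one (n : ℕ) {s : ℂ} (hs : s ≠ 0) :
    4 * n / (((2 * n : ℝ)) : ℂ) ^ (s + 1) = 2 ^ (1 - s) / (n : ℂ) ^ s := by
  rcases n.eq_zero_or_pos with rfl | hn
  · simp [zero_cpow hs]
  · have hn' : (0 : ℝ) < n := by positivity
    have h2n : ((2 * n : ℝ) : ℂ) ≠ 0 := ofReal_ne_zero.mpr (by positivity)
    have : (n : ℂ) ^ s ≠ 0 := by simp [cpow_eq_zero_iff, hn.ne']
    have : (2 : ℂ) ^ s ≠ 0 := by simp [cpow_eq_zero_iff]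
    have : (n : ℂ) ≠ 0 := by exact_mod_cast hn.ne'
    rw [cpow_add _ _ h2n, cpow_one, ofReal_mul, mul_cpow_ofReal_nonneg zero_le_two hn'.le,
      cpow_sub _ _ two_ne_zero, cpow_one]
    push_cast
    field_simp
    ring

theorem eqOn_re_Ioo_of_eqOn_re_gt {F G : ℂ → ℂ} {a b : ℝ} (hab : a < b)
    (hF : DifferentiableOn ℂ F ({z | a < z.re} \ {(b : ℂ)}))
    (hG : DifferentiableOn ℂ G ({z | a < z.re} \ {(b : ℂ)}))
    (hFG : EqOn F G {z | b < z.re}) : EqOn F G {z | a < z.re ∧ z.re < b} := by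
  -- `D` is connected, avoids `b`, and meets the half-plane `re z > b`.
  set D := {z : ℂ | a < z.re} ∩ {z | z.re < b} ∪ {z | a < z.re} ∩ {z | 0 < z.im}
  have hD_open : IsOpen D :=
    ((isOpen_lt continuous_const continuous_re).inter
      (isOpen_lt continuous_re continuous_const)).union
      ((isOpen_lt continuous_const continuous_re).inter
        (isOpen_lt continuous_const continuous_im))
  have hD_sub : D ⊆ {z | a < z.re} \ {(b : ℂ)} := by
    rintro z (⟨ha, hb : z.re < b⟩ | ⟨ha, him : 0 < z.im⟩)
    · exact ⟨ha, fun h => hb.ne (by rw [mem_singleton_iff.mp h, ofReal_re])⟩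
    · exact ⟨ha, fun h => him.ne' (by rw [mem_singleton_iff.mp h, ofReal_im])⟩
  have hD_conn : IsPreconnected D :=
    ((convex_halfSpace_re_gt a).inter (convex_halfSpace_re_lt b)).isPreconnected.union
      ⟨(a + b) / 2, 1⟩ ⟨show a < (a + b) / 2 by linarith, show (a + b) / 2 < b by linarith⟩
      ⟨show a < (a + b) / 2 by linarith, show (0 : ℝ) < 1 from one_pos⟩
      ((convex_halfSpace_re_gt a).inter (convex_halfSpace_im_gt 0)).isPreconnected
  have hz₀ : (⟨b + 1, 1⟩ : ℂ) ∈ D :=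
    Or.inr ⟨show a < b + 1 by linarith, show (0 : ℝ) < 1 from one_pos⟩
  have hFG_near : F =ᶠ[𝓝 ⟨b + 1, 1⟩] G := Filter.mem_of_superset
    ((isOpen_lt continuous_const continuous_re).mem_nhds (show b < b + 1 by linarith)) hFG
  exact fun z hz => ((hF.mono hD_sub).analyticOnNhd hD_open).eqOn_of_preconnected_of_eventuallyEq
    ((hG.mono hD_sub).analyticOnNhd hD_open) hD_conn hz₀ hFG_near (Or.inl hz)

end Complex

theorem MeasureTheory.LocallyIntegrableOn.indicator {X ε : Type*} [MeasurableSpace X]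
    [TopologicalSpace X] [TopologicalSpace ε] [ESeminormedAddMonoid ε] {μ : Measure X}
    {f : X → ε} {s t : Set X}
    (hf : LocallyIntegrableOn f s μ) (ht : MeasurableSet t) :
    LocallyIntegrableOn (t.indicator f) s μ :=
  fun x hx => (hf x hx).imp fun _ hU => ⟨hU.1, hU.2.indicator ht⟩

theorem mellin_congr {E : Type*} [NormedAddCommGroup E] [NormedSpace ℂ E] {f g : ℝ → E}
    (hfg : EqOn f g (Ioi 0)) (s : ℂ) : mellin f s = mellin g s :=
  setIntegral_congr_fun measurableSet_Ioi fun _ ht => congrArg _ (hfg ht)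

theorem hasMellin_cpow_Ioi (a : ℂ) {s : ℂ} (hs : s.re + a.re < 0) :
    HasMellin ((Ioi 1).indicator fun t : ℝ => (t : ℂ) ^ a) s (-1 / (s + a)) := by
  have hexp : (s - 1 + a).re < -1 := by
    rw [Complex.add_re, Complex.sub_re, Complex.one_re]; linarith
  have hpow : EqOn (fun t : ℝ => (t : ℂ) ^ (s - 1) • (t : ℂ) ^ a)
      (fun t : ℝ => (t : ℂ) ^ (s - 1 + a)) (Ioi 1) := fun t (ht : 1 < t) => by
    dsimp only
    rw [Complex.cpow_add _ _ (Complex.ofReal_ne_zero.mpr (by linarith)), smul_eq_mul]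
  simp_rw [HasMellin, mellin, MellinConvergent, ← indicator_smul, IntegrableOn,
    integrable_indicator_iff measurableSet_Ioi, integral_indicator measurableSet_Ioi,
    Measure.restrict_restrict_of_subset (Ioi_subset_Ioi zero_le_one),
    setIntegral_congr_fun measurableSet_Ioi hpow]
  refine ⟨((integrableOn_Ioi_cpow_of_lt hexp zero_lt_one).congr_fun hpow.symm
    measurableSet_Ioi).mono_measure Measure.restrict_le_self, ?_⟩
  rw [integral_Ioi_cpow_of_lt hexp zero_lt_one, Complex.ofReal_one, Complex.one_cpow]
  congr 1
  ring

noncomputable def cschSq (t : ℝ) : ℂ := ((1 / Real.sinh t ^ 2 : ℝ) : ℂ)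

theorem mellin_cschSq {s : ℂ} (hs : 1 < s.re) :
    mellin cschSq (s + 1) = 2 ^ (1 - s) * Complex.Gamma (s + 1) * riemannZeta s := by
  have hs0 : s ≠ 0 := by rintro rfl; norm_num at hs
  have hseries (t : ℝ) (ht : t ∈ Ioi 0) :
      HasSum (fun n : ℕ => (4 * n : ℂ) * Real.exp (-(2 * n) * t)) (cschSq t) := by
    simpa [cschSq] using Complex.hasSum_ofReal.mpr (Real.hasSum_one_div_sinh_sq ht)
  have hpos (n : ℕ) : (4 * n : ℂ) = 0 ∨ 0 < 2 * (n : ℝ) := by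
    rcases n.eq_zero_or_pos with rfl | hn
    · simp
    · exact Or.inr (by positivity)
  have hnorm (n : ℕ) : ‖(4 * n : ℂ)‖ / (2 * n : ℝ) ^ (s + 1).re
      = 2 ^ (1 - s.re) * (1 / (n : ℝ) ^ s.re) := by
    rw [Complex.add_re, Complex.one_re, norm_mul, Complex.norm_ofNat, Complex.norm_natCast,
      Real.four_mul_div_two_mul_rpow_add_one n (by linarith), mul_one_div]
  have hsum := hasSum_mellin (s := s + 1) hpos (by rw [Complex.add_re, Complex.one_re]; linarith)
    hseries (by simpa only [hnorm] using (Real.summable_one_div_nat_rpow.mpr hs).mul_left _)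
  rw [← hsum.tsum_eq, zeta_eq_tsum_one_div_nat_cpow hs, ← tsum_mul_left]
  refine tsum_congr fun n => ?_
  rw [mul_div_assoc, Complex.four_mul_div_two_mul_cpow_add_one n hs0]
  ring

noncomputable def cschSqReg (t : ℝ) : ℂ :=
  cschSq t - (Ioc 0 1).indicator (fun t : ℝ => (t : ℂ) ^ (-2 : ℂ)) t

theorem cschSqReg_of_mem_Ioc {t : ℝ} (ht : t ∈ Ioc 0 1) :
    cschSqReg t = ((1 / Real.sinh t ^ 2 - 1 / t ^ 2 : ℝ) : ℂ) := by
  rw [cschSqReg, indicator_of_mem ht, Complex.ofReal_cpow_neg_two, cschSq, Complex.ofReal_sub]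

theorem cschSqReg_of_one_lt {t : ℝ} (ht : 1 < t) : cschSqReg t = cschSq t := by
  rw [cschSqReg, indicator_of_notMem (fun h => h.2.not_gt ht), sub_zero]

theorem locallyIntegrableOn_cschSqReg : LocallyIntegrableOn cschSqReg (Ioi 0) := by
  have hcsch : ContinuousOn cschSq (Ioi 0) := fun t (ht : 0 < t) =>
    (Complex.continuous_ofReal.continuousAt.comp
      (continuousAt_const.div (Real.continuous_sinh.continuousAt.pow 2)
        (pow_ne_zero 2 (Real.sinh_pos_iff.mpr ht).ne'))).continuousWithinAt
  have hpow : ContinuousOn (fun t : ℝ => (t : ℂ) ^ (-2 : ℂ)) (Ioi 0) := fun t (ht : 0 < t) =>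
    (Complex.continuousAt_ofReal_cpow_const _ _ (Or.inr ht.ne')).continuousWithinAt
  exact (hcsch.locallyIntegrableOn measurableSet_Ioi).sub
    ((hpow.locallyIntegrableOn measurableSet_Ioi).indicator measurableSet_Ioc)

theorem cschSqReg_isBigO_atTop : cschSqReg =O[atTop] fun t => Real.exp (-2 * t) := by
  refine IsBigO.of_bound 16 ?_
  filter_upwards [eventually_gt_atTop 1] with t ht
  rw [cschSqReg_of_one_lt ht, cschSq, Complex.norm_real, Real.norm_of_nonneg (by positivity),
    Real.norm_of_nonneg (Real.exp_pos _).le]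
  exact Real.one_div_sinh_sq_le ht.le

theorem cschSqReg_isBigO_nhdsGT_zero : cschSqReg =O[𝓝[>] 0] fun _ => (1 : ℝ) := by
  refine IsBigO.of_bound 1 ?_
  filter_upwards [Ioc_mem_nhdsGT zero_lt_one] with t ht
  rw [cschSqReg_of_mem_Ioc ht, Complex.norm_real, norm_one, mul_one, Real.norm_eq_abs]
  exact Real.abs_one_div_sinh_sq_sub_one_div_sq_le_one ht.1

theorem mellinConvergent_cschSqReg {s : ℂ} (hs : 0 < s.re) : MellinConvergent cschSqReg s :=
  mellinConvergent_of_isBigO_rpow_exp two_pos locallyIntegrableOn_cschSqReg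
    cschSqReg_isBigO_atTop (by simpa using cschSqReg_isBigO_nhdsGT_zero) hs

theorem differentiableAt_mellin_cschSqReg {s : ℂ} (hs : 0 < s.re) :
    DifferentiableAt ℂ (mellin cschSqReg) s :=
  mellin_differentiableAt_of_isBigO_rpow_exp two_pos locallyIntegrableOn_cschSqReg
    cschSqReg_isBigO_atTop (by simpa using cschSqReg_isBigO_nhdsGT_zero) hs

theorem mellin_cschSq_eq_mellin_cschSqReg {s : ℂ} (hs : 1 < s.re) :
    mellin cschSq (s + 1) = mellin cschSqReg (s + 1) + 1 / (s - 1) := by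
  have hpole := hasMellin_cpow_Ioc (-2) (s := s + 1) (by
    rw [Complex.add_re, Complex.one_re, Complex.neg_re, Complex.re_ofNat]; linarith)
  have hsum := hasMellin_add (mellinConvergent_cschSqReg (s := s + 1) (by
    rw [Complex.add_re, Complex.one_re]; linarith)) hpole.1
  have hfun : (fun t => cschSqReg t + (Ioc 0 1).indicator (fun t : ℝ => (t : ℂ) ^ (-2 : ℂ)) t)
      = cschSq := funext fun t => sub_add_cancel _ _
  rw [hfun, hpole.2] at hsum
  rw [hsum.2]
  ring

theorem mellin_one_div_sinh_sq_sub_one_div_sq {s : ℂ} (h0 : -1 < s.re) (h1 : s.re < 1) :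
    mellin (fun t : ℝ => ((1 / Real.sinh t ^ 2 - 1 / t ^ 2 : ℝ) : ℂ)) (s + 1)
      = mellin cschSqReg (s + 1) + 1 / (s - 1) := by
  have htail := hasMellin_cpow_Ioi (-2) (s := s + 1) (by
    rw [Complex.add_re, Complex.one_re, Complex.neg_re, Complex.re_ofNat]; linarith)
  have hdiff := hasMellin_sub (mellinConvergent_cschSqReg (s := s + 1) (by
    rw [Complex.add_re, Complex.one_re]; linarith)) htail.1
  have hfun : EqOn (fun t : ℝ => ((1 / Real.sinh t ^ 2 - 1 / t ^ 2 : ℝ) : ℂ))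
      (fun t => cschSqReg t - (Ioi 1).indicator (fun t : ℝ => (t : ℂ) ^ (-2 : ℂ)) t)
      (Ioi 0) := by
    intro t (ht : 0 < t)
    dsimp only
    rcases le_or_gt t 1 with ht1 | ht1
    · rw [cschSqReg_of_mem_Ioc ⟨ht, ht1⟩, indicator_of_notMem (fun h => h.not_ge ht1),
        sub_zero]
    · rw [cschSqReg_of_one_lt ht1, indicator_of_mem (mem_Ioi.mpr ht1),
        Complex.ofReal_cpow_neg_two, cschSq, Complex.ofReal_sub]
  rw [mellin_congr hfun, hdiff.2, htail.2]
  ring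

theorem mellin_cschSqReg_add_one_div_eq {s : ℂ} (h0 : -1 < s.re) (h1 : s.re < 1) :
    mellin cschSqReg (s + 1) + 1 / (s - 1)
      = 2 ^ (1 - s) * Complex.Gamma (s + 1) * riemannZeta s := by
  have hG : DifferentiableOn ℂ (fun z => mellin cschSqReg (z + 1) + 1 / (z - 1))
      ({z | (-1 : ℝ) < z.re} \ {((1 : ℝ) : ℂ)}) := by
    rintro z ⟨hz : -1 < z.re, hz1 : z ≠ 1⟩
    refine DifferentiableAt.differentiableWithinAt (.add ?_ ?_)
    · refine (differentiableAt_mellin_cschSqReg ?_).comp z (by fun_prop)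
      rw [Complex.add_re, Complex.one_re]; linarith
    · exact (differentiableAt_const 1).div (by fun_prop) (sub_ne_zero.mpr hz1)
  have hZ : DifferentiableOn ℂ (fun z => 2 ^ (1 - z) * Complex.Gamma (z + 1) * riemannZeta z)
      ({z | (-1 : ℝ) < z.re} \ {((1 : ℝ) : ℂ)}) := by
    rintro z ⟨hz : -1 < z.re, hz1 : z ≠ 1⟩
    have hΓ (m : ℕ) : z + 1 ≠ -m := fun h => by
      have := congrArg Complex.re h
      rw [Complex.add_re, Complex.one_re, Complex.neg_re, Complex.natCast_re] at this
      linarith [m.cast_nonneg (α := ℝ)]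
    refine DifferentiableAt.differentiableWithinAt (.mul (.mul ?_ ?_) ?_)
    · exact (differentiableAt_id.const_sub 1).const_cpow (Or.inl two_ne_zero)
    · exact (Complex.differentiableAt_Gamma _ hΓ).comp z (by fun_prop)
    · exact differentiableAt_riemannZeta hz1
  refine Complex.eqOn_re_Ioo_of_eqOn_re_gt (by norm_num) hG hZ (fun z (hz : 1 < z.re) => ?_)
    ⟨h0, h1⟩
  simp only [← mellin_cschSq_eq_mellin_cschSqReg hz, mellin_cschSq hz]

theorem zeta_sinh_sq_gamma (s : ℂ) (h0 : -1 < s.re) (h1 : s.re < 1) :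
    riemannZeta s = (2 : ℂ) ^ (s - 1) / Complex.Gamma (1 + s) *
      ∫ t in Set.Ioi (0 : ℝ),
        (t : ℂ) ^ s * ((1 / (Real.sinh t) ^ 2 - 1 / t ^ 2 : ℝ) : ℂ) := by
  have hI : (∫ t in Ioi (0 : ℝ),
        (t : ℂ) ^ s * ((1 / (Real.sinh t) ^ 2 - 1 / t ^ 2 : ℝ) : ℂ))
      = 2 ^ (1 - s) * Complex.Gamma (s + 1) * riemannZeta s := by
    rw [← mellin_cschSqReg_add_one_div_eq h0 h1, ← mellin_one_div_sinh_sq_sub_one_div_sq h0 h1]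
    simp only [mellin, add_sub_cancel_right, smul_eq_mul]
  have hΓ : Complex.Gamma (1 + s) ≠ 0 := by
    refine Complex.Gamma_ne_zero_of_re_pos ?_
    rw [Complex.add_re, Complex.one_re]; linarith
  have h2 : (2 : ℂ) ^ (s - 1) ≠ 0 := by simp [Complex.cpow_eq_zero_iff]
  rw [hI, show 1 - s = -(s - 1) by ring, Complex.cpow_neg, add_comm s 1]
  field_simp
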